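/- Let ρ₁(s) = (−1/√5)·[[1, √2, √2], [√2, 2cos(2π/5), 2cos(6π/5)], [√2, 2cos(6π/5), 2cos(2π/5)]] and ρ₁(t) = diag(1, ζ₅², ζ₅³) with ζ₅ = exp(2πi/5). Then ρ₁(s)² = I₃, (ρ₁(s)·ρ₁(t))³ = I₃, and ρ₁(t)⁵ = I₃. -/
import Mathlib

noncomputable section

/-- `ρ₁(s)`: the s-matrix of the 3-dimensional level-5 irreducible congruence
representation of `SL(2,ℤ)`. -/
def rho1s : Matrix (Fin 3) (Fin 3) ℂ :=
  ((-1 / Real.sqrt 5 : ℝ) : ℂ) •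
    Matrix.of
      ![![1, (Real.sqrt 2 : ℂ), (Real.sqrt 2 : ℂ)],
        ![(Real.sqrt 2 : ℂ), 2 * (Real.cos (2 * Real.pi / 5) : ℂ),
          2 * (Real.cos (6 * Real.pi / 5) : ℂ)],
        ![(Real.sqrt 2 : ℂ), 2 * (Real.cos (6 * Real.pi / 5) : ℂ),
          2 * (Real.cos (2 * Real.pi / 5) : ℂ)]]

/-- `ρ₁(t) = diag(1, ζ₅², ζ₅³)` with `ζ₅ = exp(2πi/5)`. -/
def rho1t : Matrix (Fin 3) (Fin 3) ℂ :=
  Matrix.diagonal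
    ![1, Complex.exp (2 * Real.pi * Complex.I / 5) ^ 2,
      Complex.exp (2 * Real.pi * Complex.I / 5) ^ 3]

/-- The s-matrix written purely in terms of `z = ζ₅` and `r = √2`. -/
def rho1sAlg (z r : ℂ) : Matrix (Fin 3) (Fin 3) ℂ :=
  Matrix.of ![![-(1+2*z+2*z^4)/5, -(1+2*z+2*z^4)/5*r, -(1+2*z+2*z^4)/5*r],
    ![-(1+2*z+2*z^4)/5*r, -(1+2*z+2*z^4)/5*(z+z^4), -(1+2*z+2*z^4)/5*(z^2+z^3)],
    ![-(1+2*z+2*z^4)/5*r, -(1+2*z+2*z^4)/5*(z^2+z^3), -(1+2*z+2*z^4)/5*(z+z^4)]]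

/-- The t-matrix written purely in terms of `z = ζ₅`. -/
def rho1tAlg (z : ℂ) : Matrix (Fin 3) (Fin 3) ℂ :=
  Matrix.of ![![1,0,0],![0,z^2,0],![0,0,z^3]]

set_option maxHeartbeats 2000000 in
lemma rho1_relations_alg (z r : ℂ) (hp : z^4+z^3+z^2+z+1 = 0) (h2 : r^2 = 2) :
    rho1sAlg z r ^ 2 = 1 ∧ (rho1sAlg z r * rho1tAlg z) ^ 3 = 1 ∧ rho1tAlg z ^ 5 = 1 := by
  refine ⟨?_, ?_, ?_⟩
  · rw [pow_two]
    ext i j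
    fin_cases i <;> fin_cases j <;>
      simp [rho1sAlg, rho1tAlg, Matrix.mul_apply, Fin.sum_univ_three, Matrix.one_apply,
        Matrix.cons_val_two, Matrix.tail_cons, Matrix.head_cons, Matrix.vecHead, Matrix.vecTail]
    · linear_combination ((-4/5:ℂ) + (8/5:ℂ)*z + (-4/5:ℂ)*z^3 + (4/5:ℂ)*z^4) * hp + ((2/25:ℂ) + (8/25:ℂ)*z + (8/25:ℂ)*z^2 + (8/25:ℂ)*z^4 + (16/25:ℂ)*z^5 + (8/25:ℂ)*z^8) * h2
    · linear_combination ((1/25:ℂ)*r + (4/25:ℂ)*z*r + (4/25:ℂ)*z^2*r + (4/25:ℂ)*z^4*r + (8/25:ℂ)*z^5*r + (4/25:ℂ)*z^8*r) * hp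
    · linear_combination ((1/25:ℂ)*r + (4/25:ℂ)*z*r + (4/25:ℂ)*z^2*r + (4/25:ℂ)*z^4*r + (8/25:ℂ)*z^5*r + (4/25:ℂ)*z^8*r) * hp
    · linear_combination ((1/25:ℂ)*r + (4/25:ℂ)*z*r + (4/25:ℂ)*z^2*r + (4/25:ℂ)*z^4*r + (8/25:ℂ)*z^5*r + (4/25:ℂ)*z^8*r) * hp
    · linear_combination ((-23/25:ℂ) + (31/25:ℂ)*z + (1/25:ℂ)*z^2 + (-1/5:ℂ)*z^3 + (9/25:ℂ)*z^4 + (-12/25:ℂ)*z^5 + (32/25:ℂ)*z^6 + (4/25:ℂ)*z^7 + (-16/25:ℂ)*z^8 + (4/5:ℂ)*z^9 + (4/25:ℂ)*z^10 + (-4/25:ℂ)*z^11 + (4/25:ℂ)*z^12) * hp + ((1/25:ℂ) + (4/25:ℂ)*z + (4/25:ℂ)*z^2 + (4/25:ℂ)*z^4 + (8/25:ℂ)*z^5 + (4/25:ℂ)*z^8) * h2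
    · linear_combination ((2/25:ℂ) + (6/25:ℂ)*z + (-6/25:ℂ)*z^3 + (16/25:ℂ)*z^4 + (16/25:ℂ)*z^5 + (-16/25:ℂ)*z^6 + (8/25:ℂ)*z^7 + (24/25:ℂ)*z^8 + (-8/25:ℂ)*z^9 + (8/25:ℂ)*z^11) * hp + ((1/25:ℂ) + (4/25:ℂ)*z + (4/25:ℂ)*z^2 + (4/25:ℂ)*z^4 + (8/25:ℂ)*z^5 + (4/25:ℂ)*z^8) * h2
    · linear_combination ((1/25:ℂ)*r + (4/25:ℂ)*z*r + (4/25:ℂ)*z^2*r + (4/25:ℂ)*z^4*r + (8/25:ℂ)*z^5*r + (4/25:ℂ)*z^8*r) * hp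
    · linear_combination ((2/25:ℂ) + (6/25:ℂ)*z + (-6/25:ℂ)*z^3 + (16/25:ℂ)*z^4 + (16/25:ℂ)*z^5 + (-16/25:ℂ)*z^6 + (8/25:ℂ)*z^7 + (24/25:ℂ)*z^8 + (-8/25:ℂ)*z^9 + (8/25:ℂ)*z^11) * hp + ((1/25:ℂ) + (4/25:ℂ)*z + (4/25:ℂ)*z^2 + (4/25:ℂ)*z^4 + (8/25:ℂ)*z^5 + (4/25:ℂ)*z^8) * h2
    · linear_combination ((-23/25:ℂ) + (31/25:ℂ)*z + (1/25:ℂ)*z^2 + (-1/5:ℂ)*z^3 + (9/25:ℂ)*z^4 + (-12/25:ℂ)*z^5 + (32/25:ℂ)*z^6 + (4/25:ℂ)*z^7 + (-16/25:ℂ)*z^8 + (4/5:ℂ)*z^9 + (4/25:ℂ)*z^10 + (-4/25:ℂ)*z^11 + (4/25:ℂ)*z^12) * hp + ((1/25:ℂ) + (4/25:ℂ)*z + (4/25:ℂ)*z^2 + (4/25:ℂ)*z^4 + (8/25:ℂ)*z^5 + (4/25:ℂ)*z^8) * h2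
  · rw [pow_succ, pow_succ, pow_one]
    ext i j
    fin_cases i <;> fin_cases j <;>
      simp [rho1sAlg, rho1tAlg, Matrix.mul_apply, Fin.sum_univ_three, Matrix.one_apply,
        Matrix.cons_val_two, Matrix.tail_cons, Matrix.head_cons, Matrix.vecHead, Matrix.vecTail]
    · linear_combination ((-126/125:ℂ) + (24/25:ℂ)*z + (-2/25:ℂ)*z^2 + (-4/25:ℂ)*z^3 + (-42/125:ℂ)*z^4 + (-154/125:ℂ)*z^5 + (134/125:ℂ)*z^6 + (-68/125:ℂ)*z^7 + (-132/125:ℂ)*z^8 + (-4/25:ℂ)*z^9 + (-132/125:ℂ)*z^10 + (64/125:ℂ)*z^11 + (-88/125:ℂ)*z^12 + (-152/125:ℂ)*z^13 + (72/125:ℂ)*z^14 + (-48/125:ℂ)*z^15 + (-48/125:ℂ)*z^16 + (16/125:ℂ)*z^17 + (-16/125:ℂ)*z^18) * hp + ((-2/125:ℂ)*z^2 + (-14/125:ℂ)*z^3 + (-36/125:ℂ)*z^4 + (-41/125:ℂ)*z^5 + (-34/125:ℂ)*z^6 + (-3/5:ℂ)*z^7 + (-1:ℂ)*z^8 + (-108/125:ℂ)*z^9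 + (-109/125:ℂ)*z^10 + (-144/125:ℂ)*z^11 + (-6/5:ℂ)*z^12 + (-164/125:ℂ)*z^13 + (-118/125:ℂ)*z^14 + (-76/125:ℂ)*z^15 + (-132/125:ℂ)*z^16 + (-16/25:ℂ)*z^17 + (-12/125:ℂ)*z^18 + (-48/125:ℂ)*z^19 + (-24/125:ℂ)*z^20 + (-8/125:ℂ)*z^22) * h2
    · linear_combination ((-1/125:ℂ)*z^2*r + (-1/25:ℂ)*z^3*r + (-8/125:ℂ)*z^4*r + (-9/125:ℂ)*z^5*r + (-1/5:ℂ)*z^6*r + (-6/25:ℂ)*z^7*r + (3/125:ℂ)*z^8*r + (-7/25:ℂ)*z^9*r + (-18/25:ℂ)*z^10*r + (3/25:ℂ)*z^11*r + (-4/125:ℂ)*z^12*r + (-154/125:ℂ)*z^13*r + (-16/125:ℂ)*z^14*r + (26/125:ℂ)*z^15*r + (-148/125:ℂ)*z^16*r + (-44/125:ℂ)*z^17*r + (24/125:ℂ)*z^18*r + (-76/125:ℂ)*z^19*r + (-32/125:ℂ)*z^20*r + (8/125:ℂ)*z^21*r + (-16/125:ℂ)*z^22*r + (-8/125:ℂ)*z^23*r)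 * hp + ((-1/125:ℂ)*z^4*r + (-7/125:ℂ)*z^5*r + (-18/125:ℂ)*z^6*r + (-4/25:ℂ)*z^7*r + (-14/125:ℂ)*z^8*r + (-6/25:ℂ)*z^9*r + (-48/125:ℂ)*z^10*r + (-24/125:ℂ)*z^11*r + (-12/125:ℂ)*z^12*r + (-36/125:ℂ)*z^13*r + (-24/125:ℂ)*z^14*r + (-8/125:ℂ)*z^16*r + (-8/125:ℂ)*z^17*r) * h2
    · linear_combination ((-1/125:ℂ)*z^3*r + (-1/25:ℂ)*z^4*r + (-8/125:ℂ)*z^5*r + (-8/125:ℂ)*z^6*r + (-22/125:ℂ)*z^7*r + (-34/125:ℂ)*z^8*r + (-2/25:ℂ)*z^9*r + (-16/125:ℂ)*z^10*r + (-61/125:ℂ)*z^11*r + (-49/125:ℂ)*z^12*r + (-27/125:ℂ)*z^13*r + (-26/125:ℂ)*z^14*r + (-66/125:ℂ)*z^15*r + (-114/125:ℂ)*z^16*r + (2/125:ℂ)*z^17*r + (-132/125:ℂ)*z^19*r + (-12/125:ℂ)*z^20*r + (28/125:ℂ)*z^21*r + (-56/125:ℂ)*z^22*r + (-8/125:ℂ)*z^23*r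 + (8/125:ℂ)*z^24*r + (-8/125:ℂ)*z^25*r) * hp + ((-1/125:ℂ)*z^5*r + (-7/125:ℂ)*z^6*r + (-18/125:ℂ)*z^7*r + (-4/25:ℂ)*z^8*r + (-14/125:ℂ)*z^9*r + (-6/25:ℂ)*z^10*r + (-48/125:ℂ)*z^11*r + (-24/125:ℂ)*z^12*r + (-12/125:ℂ)*z^13*r + (-36/125:ℂ)*z^14*r + (-24/125:ℂ)*z^15*r + (-8/125:ℂ)*z^17*r + (-8/125:ℂ)*z^18*r) * h2
    · linear_combination ((-1/125:ℂ)*r + (-1/25:ℂ)*z*r + (-8/125:ℂ)*z^2*r + (-9/125:ℂ)*z^3*r + (-1/5:ℂ)*z^4*r + (-6/25:ℂ)*z^5*r + (3/125:ℂ)*z^6*r + (-7/25:ℂ)*z^7*r + (-18/25:ℂ)*z^8*r + (3/25:ℂ)*z^9*r + (-4/125:ℂ)*z^10*r + (-154/125:ℂ)*z^11*r + (-16/125:ℂ)*z^12*r + (26/125:ℂ)*z^13*r + (-148/125:ℂ)*z^14*r + (-44/125:ℂ)*z^15*r + (24/125:ℂ)*z^16*r + (-76/125:ℂ)*z^17*r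 + (-32/125:ℂ)*z^18*r + (8/125:ℂ)*z^19*r + (-16/125:ℂ)*z^20*r + (-8/125:ℂ)*z^21*r) * hp + ((-1/125:ℂ)*z^2*r + (-7/125:ℂ)*z^3*r + (-18/125:ℂ)*z^4*r + (-4/25:ℂ)*z^5*r + (-14/125:ℂ)*z^6*r + (-6/25:ℂ)*z^7*r + (-48/125:ℂ)*z^8*r + (-24/125:ℂ)*z^9*r + (-12/125:ℂ)*z^10*r + (-36/125:ℂ)*z^11*r + (-24/125:ℂ)*z^12*r + (-8/125:ℂ)*z^14*r + (-8/125:ℂ)*z^15*r) * h2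
    · linear_combination ((-1:ℂ) + z + (-2/125:ℂ)*z^2 + (-2/25:ℂ)*z^3 + (-12/125:ℂ)*z^4 + (-121/125:ℂ)*z^5 + (109/125:ℂ)*z^6 + (-66/125:ℂ)*z^7 + (-22/125:ℂ)*z^8 + (-21/125:ℂ)*z^9 + (-254/125:ℂ)*z^10 + (119/125:ℂ)*z^11 + (21/125:ℂ)*z^12 + (-242/125:ℂ)*z^13 + (-66/125:ℂ)*z^14 + (-34/125:ℂ)*z^15 + (-6/25:ℂ)*z^16 + (-152/125:ℂ)*z^17 + (-28/25:ℂ)*z^18 + (-28/125:ℂ)*z^19 + (-4/5:ℂ)*z^20 + (-72/125:ℂ)*z^21 + (-56/125:ℂ)*z^22 + (-56/125:ℂ)*z^23 + (-8/125:ℂ)*z^24 + (-16/125:ℂ)*z^25 + (-16/125:ℂ)*z^26) * hp + ((-1/125:ℂ)*z^2 + (-6/125:ℂ)*z^3 + (-12/125:ℂ)*z^4 + (-2/25:ℂ)*z^5 + (-18/125:ℂ)*z^6 + (-2/5:ℂ)*z^7 + (-56/125:ℂ)*z^8 + (-12/25:ℂ)*z^9 + (-124/125:ℂ)*z^10 +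 (-116/125:ℂ)*z^11 + (-72/125:ℂ)*z^12 + (-168/125:ℂ)*z^13 + (-152/125:ℂ)*z^14 + (-24/125:ℂ)*z^15 + (-96/125:ℂ)*z^16 + (-112/125:ℂ)*z^17 + (-16/125:ℂ)*z^19 + (-32/125:ℂ)*z^20) * h2
    · linear_combination ((-2/125:ℂ)*z^3 + (-2/25:ℂ)*z^4 + (-12/125:ℂ)*z^5 + (6/125:ℂ)*z^6 + (-2/25:ℂ)*z^7 + (-74/125:ℂ)*z^8 + (-2/5:ℂ)*z^9 + (2/25:ℂ)*z^10 + (-13/25:ℂ)*z^11 + (-101/125:ℂ)*z^12 + (-52/125:ℂ)*z^13 + (-68/125:ℂ)*z^14 + (-47/125:ℂ)*z^15 + (-73/125:ℂ)*z^16 + (-6/5:ℂ)*z^17 + (-84/125:ℂ)*z^18 + (-42/125:ℂ)*z^19 + (-106/125:ℂ)*z^20 + (-128/125:ℂ)*z^21 + (-56/125:ℂ)*z^22 + (-4/25:ℂ)*z^23 + (-12/25:ℂ)*z^24 + (-8/25:ℂ)*z^25 + (-8/125:ℂ)*z^27 + (-8/125:ℂ)*z^28) * hp + ((-1/125:ℂ)*z^3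 + (-6/125:ℂ)*z^4 + (-12/125:ℂ)*z^5 + (-9/125:ℂ)*z^6 + (-14/125:ℂ)*z^7 + (-2/5:ℂ)*z^8 + (-14/25:ℂ)*z^9 + (-59/125:ℂ)*z^10 + (-94/125:ℂ)*z^11 + (-136/125:ℂ)*z^12 + (-116/125:ℂ)*z^13 + (-114/125:ℂ)*z^14 + (-128/125:ℂ)*z^15 + (-96/125:ℂ)*z^16 + (-72/125:ℂ)*z^17 + (-68/125:ℂ)*z^18 + (-8/25:ℂ)*z^19 + (-16/125:ℂ)*z^20 + (-16/125:ℂ)*z^21 + (-8/125:ℂ)*z^22) * h2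
    · linear_combination ((-1/125:ℂ)*r + (-1/25:ℂ)*z*r + (-8/125:ℂ)*z^2*r + (-8/125:ℂ)*z^3*r + (-22/125:ℂ)*z^4*r + (-34/125:ℂ)*z^5*r + (-2/25:ℂ)*z^6*r + (-16/125:ℂ)*z^7*r + (-61/125:ℂ)*z^8*r + (-49/125:ℂ)*z^9*r + (-27/125:ℂ)*z^10*r + (-26/125:ℂ)*z^11*r + (-66/125:ℂ)*z^12*r + (-114/125:ℂ)*z^13*r + (2/125:ℂ)*z^14*r + (-132/125:ℂ)*z^16*r + (-12/125:ℂ)*z^17*r + (28/125:ℂ)*z^18*r + (-56/125:ℂ)*z^19*r + (-8/125:ℂ)*z^20*r + (8/125:ℂ)*z^21*r + (-8/125:ℂ)*z^22*r) * hp + ((-1/125:ℂ)*z^2*r + (-7/125:ℂ)*z^3*r + (-18/125:ℂ)*z^4*r + (-4/25:ℂ)*z^5*r + (-14/125:ℂ)*z^6*r + (-6/25:ℂ)*z^7*r + (-48/125:ℂ)*z^8*r + (-24/125:ℂ)*z^9*r + (-12/125:ℂ)*z^10*r + (-36/125:ℂ)*z^11*r + (-24/125:ℂ)*z^12*r + (-8/125:ℂ)*z^14*r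 + (-8/125:ℂ)*z^15*r) * h2
    · linear_combination ((-2/125:ℂ)*z^2 + (-2/25:ℂ)*z^3 + (-12/125:ℂ)*z^4 + (6/125:ℂ)*z^5 + (-2/25:ℂ)*z^6 + (-74/125:ℂ)*z^7 + (-2/5:ℂ)*z^8 + (2/25:ℂ)*z^9 + (-13/25:ℂ)*z^10 + (-101/125:ℂ)*z^11 + (-52/125:ℂ)*z^12 + (-68/125:ℂ)*z^13 + (-47/125:ℂ)*z^14 + (-73/125:ℂ)*z^15 + (-6/5:ℂ)*z^16 + (-84/125:ℂ)*z^17 + (-42/125:ℂ)*z^18 + (-106/125:ℂ)*z^19 + (-128/125:ℂ)*z^20 + (-56/125:ℂ)*z^21 + (-4/25:ℂ)*z^22 + (-12/25:ℂ)*z^23 + (-8/25:ℂ)*z^24 + (-8/125:ℂ)*z^26 + (-8/125:ℂ)*z^27) * hp + ((-1/125:ℂ)*z^2 + (-6/125:ℂ)*z^3 + (-12/125:ℂ)*z^4 + (-9/125:ℂ)*z^5 + (-14/125:ℂ)*z^6 + (-2/5:ℂ)*z^7 + (-14/25:ℂ)*z^8 + (-59/125:ℂ)*z^9 + (-94/125:ℂ)*z^10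 + (-136/125:ℂ)*z^11 + (-116/125:ℂ)*z^12 + (-114/125:ℂ)*z^13 + (-128/125:ℂ)*z^14 + (-96/125:ℂ)*z^15 + (-72/125:ℂ)*z^16 + (-68/125:ℂ)*z^17 + (-8/25:ℂ)*z^18 + (-16/125:ℂ)*z^19 + (-16/125:ℂ)*z^20 + (-8/125:ℂ)*z^21) * h2
    · linear_combination ((-1:ℂ) + z + (-2/125:ℂ)*z^3 + (-2/25:ℂ)*z^4 + (-137/125:ℂ)*z^5 + (133/125:ℂ)*z^6 + (-4/125:ℂ)*z^7 + (-82/125:ℂ)*z^8 + (-78/125:ℂ)*z^9 + (-17/25:ℂ)*z^10 + (121/125:ℂ)*z^11 + (-38/25:ℂ)*z^12 + (-104/125:ℂ)*z^13 + (17/25:ℂ)*z^14 + (-44/25:ℂ)*z^15 + (-51/125:ℂ)*z^16 + (-19/125:ℂ)*z^17 + (-148/125:ℂ)*z^18 + (-96/125:ℂ)*z^19 + (-26/25:ℂ)*z^20 + (-14/125:ℂ)*z^21 + (-52/125:ℂ)*z^22 + (-152/125:ℂ)*z^23 + (12/125:ℂ)*z^24 + (12/125:ℂ)*z^25 + (-64/125:ℂ)*z^26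 + (8/125:ℂ)*z^28 + (-8/125:ℂ)*z^29) * hp + ((-1/125:ℂ)*z^3 + (-6/125:ℂ)*z^4 + (-12/125:ℂ)*z^5 + (-8/125:ℂ)*z^6 + (-2/25:ℂ)*z^7 + (-2/5:ℂ)*z^8 + (-84/125:ℂ)*z^9 + (-58/125:ℂ)*z^10 + (-64/125:ℂ)*z^11 + (-156/125:ℂ)*z^12 + (-32/25:ℂ)*z^13 + (-12/25:ℂ)*z^14 + (-104/125:ℂ)*z^15 + (-168/125:ℂ)*z^16 + (-48/125:ℂ)*z^17 + (-24/125:ℂ)*z^18 + (-16/25:ℂ)*z^19 + (-16/125:ℂ)*z^20 + (-16/125:ℂ)*z^22) * h2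
  · rw [pow_succ, pow_succ, pow_succ, pow_succ, pow_one]
    ext i j
    fin_cases i <;> fin_cases j <;>
      simp [rho1sAlg, rho1tAlg, Matrix.mul_apply, Fin.sum_univ_three, Matrix.one_apply,
        Matrix.cons_val_two, Matrix.tail_cons, Matrix.head_cons, Matrix.vecHead, Matrix.vecTail]
    · linear_combination (z^6 - z^5 + z - 1) * hp
    · linear_combination (z^11 - z^10 + z^6 - z^5 + z - 1) * hp

theorem rho1_relations :
    rho1s ^ 2 = 1 ∧ (rho1s * rho1t) ^ 3 = 1 ∧ rho1t ^ 5 = 1 := by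
  have hπ := Real.pi_pos
  set z : ℂ := Complex.exp (2 * Real.pi * Complex.I / 5) with hzdef
  have hz5 : z ^ 5 = 1 := by
    rw [hzdef, ← Complex.exp_nat_mul]
    rw [show ((5 : ℕ) : ℂ) * (2 * Real.pi * Complex.I / 5) = 2 * Real.pi * Complex.I by
      push_cast; ring]
    exact Complex.exp_two_pi_mul_I
  have hzne : z ≠ 1 := by
    rw [hzdef, Ne, Complex.exp_eq_one_iff]
    rintro ⟨n, hn⟩
    have hne : (2 * (Real.pi : ℂ) * Complex.I) ≠ 0 := by
      simp [Real.pi_ne_zero, Complex.I_ne_zero]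
    have h0 : ((n : ℂ) * 5 - 1) * (2 * (Real.pi : ℂ) * Complex.I) = 0 := by
      linear_combination (-5 : ℂ) * hn
    rcases mul_eq_zero.mp h0 with h | h
    · have : (n * 5 : ℤ) = 1 := by exact_mod_cast sub_eq_zero.mp h
      omega
    · exact hne h
  have hp : z^4 + z^3 + z^2 + z + 1 = 0 := by
    have h0 : (z - 1) * (z^4 + z^3 + z^2 + z + 1) = 0 := by linear_combination hz5
    rcases mul_eq_zero.mp h0 with h | h
    · exact absurd (sub_eq_zero.mp h) hzne
    · exact h
  have hzne0 : z ≠ 0 := Complex.exp_ne_zero _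
  have hcosA : ((Real.cos (2 * Real.pi / 5) : ℝ) : ℂ) = (z + z^4) / 2 := by
    rw [Complex.ofReal_cos]
    have h1 : Complex.exp ((2 * Real.pi / 5 : ℝ) * Complex.I) = z := by
      rw [hzdef]; push_cast; ring_nf
    have h2 : Complex.exp (-((2 * Real.pi / 5 : ℝ) : ℂ) * Complex.I) = z^4 := by
      rw [neg_mul, Complex.exp_neg, h1]
      field_simp
      linear_combination -hz5
    have := Complex.two_cos (x := ((2 * Real.pi / 5 : ℝ) : ℂ))
    rw [h1, h2] at this
    linear_combination this / 2
  have hcosB : ((Real.cos (6 * Real.pi / 5) : ℝ) : ℂ) = (z^2 + z^3) / 2 := by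
    rw [Complex.ofReal_cos]
    have h1 : Complex.exp ((6 * Real.pi / 5 : ℝ) * Complex.I) = z^3 := by
      rw [hzdef, ← Complex.exp_nat_mul (n := 3)]
      push_cast; ring_nf
    have h2 : Complex.exp (-((6 * Real.pi / 5 : ℝ) : ℂ) * Complex.I) = z^2 := by
      rw [neg_mul, Complex.exp_neg, h1]
      field_simp
      linear_combination -hz5
    have := Complex.two_cos (x := ((6 * Real.pi / 5 : ℝ) : ℂ))
    rw [h1, h2] at this
    linear_combination this / 2
  have hsq5 : ((Real.sqrt 5 : ℝ) : ℂ) = 1 + 2*z + 2*z^4 := by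
    have hcpos : 0 < Real.cos (2 * Real.pi / 5) := by
      apply Real.cos_pos_of_mem_Ioo
      constructor <;> [nlinarith; nlinarith]
    have hsq : (1 + 4 * Real.cos (2 * Real.pi / 5))^2 = 5 := by
      have hc : ((1 + 4 * Real.cos (2 * Real.pi / 5) : ℝ) : ℂ)^2 = 5 := by
        have e : ((1 + 4 * Real.cos (2 * Real.pi / 5) : ℝ) : ℂ)
            = 1 + 4 * ((Real.cos (2 * Real.pi / 5) : ℝ) : ℂ) := by push_cast; ring
        rw [e, hcosA]
        linear_combination ((-4:ℂ) + (8:ℂ)*z + (-4:ℂ)*z^3 + (4:ℂ)*z^4) * hp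
      exact_mod_cast hc
    have h5 : Real.sqrt 5 = 1 + 4 * Real.cos (2 * Real.pi / 5) := by
      have h' : Real.sqrt ((1 + 4 * Real.cos (2 * Real.pi / 5))^2)
          = 1 + 4 * Real.cos (2 * Real.pi / 5) := Real.sqrt_sq (by linarith)
      rw [hsq] at h'
      exact h'
    rw [h5]
    have e : ((1 + 4 * Real.cos (2 * Real.pi / 5) : ℝ) : ℂ)
        = 1 + 4 * ((Real.cos (2 * Real.pi / 5) : ℝ) : ℂ) := by push_cast; ring
    rw [e, hcosA]; ring
  have hwsq : (1 + 2*z + 2*z^4)^2 = 5 := by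
    linear_combination ((-4:ℂ) + 8*z - 4*z^3 + 4*z^4) * hp
  have hwne : (1 + 2*z + 2*z^4) ≠ 0 := by
    intro h0
    rw [h0] at hwsq
    norm_num at hwsq
  have hq : ((-1 / Real.sqrt 5 : ℝ) : ℂ) = -(1+2*z+2*z^4)/5 := by
    push_cast
    rw [hsq5]
    field_simp
    linear_combination hwsq
  have hr2 : ((Real.sqrt 2 : ℝ) : ℂ)^2 = 2 := by
    rw [← Complex.ofReal_pow, Real.sq_sqrt (by norm_num : (0:ℝ) ≤ 2)]
    norm_num
  have hS : rho1s = rho1sAlg z ((Real.sqrt 2 : ℝ) : ℂ) := by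
    ext i j
    fin_cases i <;> fin_cases j <;>
      (simp [rho1s, rho1sAlg, hq, hcosA, hcosB, Matrix.smul_apply, smul_eq_mul] <;>
        (first | ring1 | (left; ring1) | tauto))
  have hT : rho1t = rho1tAlg z := by
    ext i j
    fin_cases i <;> fin_cases j <;>
      simp [rho1t, rho1tAlg, Matrix.diagonal, ← hzdef, Matrix.cons_val_two, Matrix.tail_cons, Matrix.head_cons, Matrix.vecHead, Matrix.vecTail]
  rw [hS, hT]
  exact rho1_relations_alg z _ hp hr2

end
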